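/- Under the unique-optimum assumption, for any δ with 0 < δ ≤ δ̄_p (δ finite), the diameter D^p_δ of the primal δ-sublevel set satisfies δ · max_{1≤j≤n−m} √(‖B⁻¹N_{·,j}‖² + 1)/s*_{m+j} ≤ D^p_δ ≤ 2δ · max_{1≤j≤n−m} √(‖B⁻¹N_{·,j}‖² + 1)/s*_{m+j}. -/
import Mathlib


open Matrix
open scoped BigOperators

noncomputable section

namespace LPPaper

/-- Euclidean norm of a finite real vector. -/
def enorm {k : ℕ} (v : Fin k → ℝ) : ℝ := Real.sqrt (∑ i, (v i) ^ 2)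

/-- ℓ₁ norm of a finite real vector. -/
def l1 {k : ℕ} (v : Fin k → ℝ) : ℝ := ∑ i, |v i|

/-- Spectral norm (operator 2-norm w.r.t. Euclidean norms) of a real matrix. -/
def specNorm {α β : Type*} [Fintype α] [Fintype β] [DecidableEq β] (M : Matrix α β ℝ) : ℝ :=
  ‖LinearMap.toContinuousLinearMap (Matrix.toEuclideanLin M)‖

variable {m n : ℕ}

/-- Embedding of basic indices (the first `m` coordinates). -/
def bIdx (hmn : m ≤ n) (i : Fin m) : Fin n := Fin.castLE hmn i

/-- Embedding of nonbasic indices (the last `n - m` coordinates). -/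
def nIdx (hmn : m ≤ n) (j : Fin (n - m)) : Fin n := ⟨m + j.val, by have := j.isLt; omega⟩

/-- The basis matrix `B`: the first `m` columns of `A`. -/
def Bmat (hmn : m ≤ n) (A : Matrix (Fin m) (Fin n) ℝ) : Matrix (Fin m) (Fin m) ℝ :=
  Matrix.of fun i j => A i (bIdx hmn j)

/-- The nonbasic matrix `N`: the last `n - m` columns of `A`. -/
def Nmat (hmn : m ≤ n) (A : Matrix (Fin m) (Fin n) ℝ) : Matrix (Fin m) (Fin (n - m)) ℝ :=
  Matrix.of fun i j => A i (nIdx hmn j)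

/-- The simplex tableau `B⁻¹N` at the optimal basis. -/
def BN (hmn : m ≤ n) (A : Matrix (Fin m) (Fin n) ℝ) : Matrix (Fin m) (Fin (n - m)) ℝ :=
  (Bmat hmn A)⁻¹ * Nmat hmn A

/-- `q := Aᵀ(AAᵀ)⁻¹ b`. -/
def qvec (A : Matrix (Fin m) (Fin n) ℝ) (b : Fin m → ℝ) : Fin n → ℝ :=
  Aᵀ *ᵥ ((A * Aᵀ)⁻¹ *ᵥ b)

/-- Primal feasibility: `Ax = b`, `x ≥ 0`. -/
def PrimalFeasible (A : Matrix (Fin m) (Fin n) ℝ) (b : Fin m → ℝ) (x : Fin n → ℝ) : Prop :=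
  A *ᵥ x = b ∧ ∀ i, 0 ≤ x i

/-- Dual feasibility: `Aᵀy + s = c`, `s ≥ 0`. -/
def DualFeasible (A : Matrix (Fin m) (Fin n) ℝ) (c : Fin n → ℝ) (y : Fin m → ℝ)
    (s : Fin n → ℝ) : Prop :=
  Aᵀ *ᵥ y + s = c ∧ ∀ i, 0 ≤ s i

/-- The unique-optimum assumption (Assumption 1 of the paper), with the optimal basis being
(after a permutation of the variables) the set of the first `m` indices: the rows of `A` are
linearly independent, `x*` is the unique primal optimal solution, `(y*, s*)` the unique dual
optimal solution, the basis matrix `B` is invertible, `x*ᵢ > 0` exactly for the first `m`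
indices and `s*ᵢ > 0` exactly for the remaining indices. -/
structure UniqueOpt (hmn : m ≤ n) (A : Matrix (Fin m) (Fin n) ℝ) (b : Fin m → ℝ)
    (c : Fin n → ℝ) (xstar : Fin n → ℝ) (ystar : Fin m → ℝ) (sstar : Fin n → ℝ) : Prop where
  rows_indep : LinearIndependent ℝ (fun i => A i)
  primal_feas : PrimalFeasible A b xstar
  primal_opt : ∀ x, PrimalFeasible A b x → c ⬝ᵥ xstar ≤ c ⬝ᵥ x
  primal_uniq : ∀ x, PrimalFeasible A b x → c ⬝ᵥ x = c ⬝ᵥ xstar → x = xstar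
  dual_feas : DualFeasible A c ystar sstar
  dual_opt : ∀ y s, DualFeasible A c y s → b ⬝ᵥ y ≤ b ⬝ᵥ ystar
  dual_uniq : ∀ y s, DualFeasible A c y s → b ⬝ᵥ y = b ⬝ᵥ ystar → y = ystar ∧ s = sstar
  basis_isUnit : IsUnit (Bmat hmn A).det
  xstar_supp : ∀ i : Fin n, 0 < xstar i ↔ (i : ℕ) < m
  sstar_supp : ∀ i : Fin n, 0 < sstar i ↔ m ≤ (i : ℕ)

/-- The `max` factor appearing in the geometric condition number `Φ`. -/
def PhiFactor (hmn : m ≤ n) (A : Matrix (Fin m) (Fin n) ℝ) (xstar sstar : Fin n → ℝ) : ℝ :=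
  max (⨆ j : Fin (n - m),
        Real.sqrt ((∑ i, (BN hmn A i j) ^ 2) + 1) / sstar (nIdx hmn j))
      (⨆ i : Fin m,
        Real.sqrt ((∑ j, (BN hmn A i j) ^ 2) + 1) / xstar (bIdx hmn i))

/-- The geometric condition number `Φ`. -/
def Phi (hmn : m ≤ n) (A : Matrix (Fin m) (Fin n) ℝ) (xstar sstar : Fin n → ℝ) : ℝ :=
  (l1 xstar + l1 sstar) * PhiFactor hmn A xstar sstar


/-- The primal `δ`-sublevel set `X_δ`. -/
def Xlev (A : Matrix (Fin m) (Fin n) ℝ) (b : Fin m → ℝ) (c : Fin n → ℝ)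
    (xstar : Fin n → ℝ) (δ : ℝ) : Set (Fin n → ℝ) :=
  {x | PrimalFeasible A b x ∧ c ⬝ᵥ x - c ⬝ᵥ xstar ≤ δ}

/-- The direction `u^j` of the `j`-th edge emanating from the optimal solution:
`u^j` restricted to the first `m` coordinates is `-B⁻¹N_{·,j}`, the `(m+j)`-th
coordinate is `1`, and all other coordinates are `0`. -/
def uvec (hmn : m ≤ n) (A : Matrix (Fin m) (Fin n) ℝ) (j : Fin (n - m)) : Fin n → ℝ :=
  fun i => if h : (i : ℕ) < m then -(BN hmn A ⟨i, h⟩ j)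
    else if (i : ℕ) = m + (j : ℕ) then 1 else 0

/-- The diameter `D^p_δ` of the primal `δ`-sublevel set. -/
def DdiamP (A : Matrix (Fin m) (Fin n) ℝ) (b : Fin m → ℝ) (c : Fin n → ℝ)
    (xstar : Fin n → ℝ) (δ : ℝ) : ℝ :=
  sSup {d | ∃ u ∈ Xlev A b c xstar δ, ∃ v ∈ Xlev A b c xstar δ, d = enorm (u - v)}


/-! ### Auxiliary lemmas -/

section Aux

lemma enorm_eq' {k : ℕ} (v : Fin k → ℝ) :
    enorm v = ‖(WithLp.equiv 2 (Fin k → ℝ)).symm v‖ := by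
  simp [enorm, EuclideanSpace.norm_eq, Real.norm_eq_abs, sq_abs]

lemma enorm_nonneg' {k : ℕ} (v : Fin k → ℝ) : 0 ≤ enorm v := Real.sqrt_nonneg _

lemma enorm_smul' {k : ℕ} (t : ℝ) (v : Fin k → ℝ) : enorm (t • v) = |t| * enorm v := by
  rw [enorm_eq', enorm_eq']
  rw [show (WithLp.equiv 2 (Fin k → ℝ)).symm (t • v)
      = t • (WithLp.equiv 2 (Fin k → ℝ)).symm v from rfl]
  rw [norm_smul, Real.norm_eq_abs]

lemma enorm_sub_le' {k : ℕ} (u v : Fin k → ℝ) : enorm (u - v) ≤ enorm u + enorm v := by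
  rw [enorm_eq', enorm_eq', enorm_eq']
  rw [show (WithLp.equiv 2 (Fin k → ℝ)).symm (u - v)
      = (WithLp.equiv 2 (Fin k → ℝ)).symm u - (WithLp.equiv 2 (Fin k → ℝ)).symm v from rfl]
  exact norm_sub_le _ _

lemma enorm_sum_le' {k N : ℕ} (f : Fin N → Fin k → ℝ) :
    enorm (∑ j, f j) ≤ ∑ j, enorm (f j) := by
  rw [enorm_eq']
  rw [show (WithLp.equiv 2 (Fin k → ℝ)).symm (∑ j, f j)
      = ∑ j, (WithLp.equiv 2 (Fin k → ℝ)).symm (f j) from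
    map_sum (WithLp.linearEquiv 2 ℝ (Fin k → ℝ)).symm.toLinearMap f Finset.univ]
  refine (norm_sum_le _ _).trans ?_
  simp [enorm_eq']

lemma sum_split (hmn : m ≤ n) (f : Fin n → ℝ) :
    ∑ i, f i = ∑ i : Fin m, f (bIdx hmn i) + ∑ j : Fin (n - m), f (nIdx hmn j) := by
  rw [← Equiv.sum_comp (finCongr (Nat.add_sub_cancel' hmn)) f, Fin.sum_univ_add]
  rfl

variable {hmn : m ≤ n} {A : Matrix (Fin m) (Fin n) ℝ} {b : Fin m → ℝ}
  {c : Fin n → ℝ} {xstar : Fin n → ℝ} {ystar : Fin m → ℝ} {sstar : Fin n → ℝ}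

lemma uvec_bIdx (j : Fin (n - m)) (i : Fin m) :
    uvec hmn A j (bIdx hmn i) = -(BN hmn A i j) := by
  simp [uvec, bIdx]

lemma uvec_nIdx (j j' : Fin (n - m)) :
    uvec hmn A j (nIdx hmn j') = if j' = j then 1 else 0 := by
  have h1 : ¬ ((nIdx hmn j' : Fin n) : ℕ) < m := by simp [nIdx]
  rw [uvec, dif_neg h1]
  have h2 : (((nIdx hmn j' : Fin n) : ℕ) = m + (j : ℕ)) ↔ j' = j := by
    simp [nIdx, Fin.ext_iff]
  by_cases hjj : j' = j
  · rw [if_pos (h2.2 hjj), if_pos hjj]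
  · rw [if_neg (fun hc => hjj (h2.1 hc)), if_neg hjj]

section WithH

variable (h : UniqueOpt hmn A b c xstar ystar sstar)
include h

lemma sstar_zero {i : Fin n} (hi : (i : ℕ) < m) : sstar i = 0 := by
  rcases (h.dual_feas.2 i).lt_or_eq with hlt | he
  · exact absurd ((h.sstar_supp i).1 hlt) (by omega)
  · exact he.symm

lemma xstar_zero {i : Fin n} (hi : m ≤ (i : ℕ)) : xstar i = 0 := by
  rcases (h.primal_feas.2 i).lt_or_eq with hlt | he
  · exact absurd ((h.xstar_supp i).1 hlt) (by omega)
  · exact he.symm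

lemma sstar_pos (j : Fin (n - m)) : 0 < sstar (nIdx hmn j) :=
  (h.sstar_supp _).2 (by simp [nIdx])

lemma xstar_pos (i : Fin m) : 0 < xstar (bIdx hmn i) :=
  (h.xstar_supp _).2 (by simpa [bIdx] using i.isLt)

/-- Kernel structure: basic coordinates of a kernel vector. -/
lemma ker_basic {w : Fin n → ℝ} (hw : A *ᵥ w = 0) (i : Fin m) :
    w (bIdx hmn i) = -∑ j, BN hmn A i j * w (nIdx hmn j) := by
  have key : Bmat hmn A *ᵥ (fun i => w (bIdx hmn i))
      = -(Nmat hmn A *ᵥ fun j => w (nIdx hmn j)) := by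
    funext r
    show (∑ i, A r (bIdx hmn i) * w (bIdx hmn i))
        = -(∑ j', A r (nIdx hmn j') * w (nIdx hmn j'))
    have h0 := congrFun hw r
    simp only [Matrix.mulVec, dotProduct, Pi.zero_apply] at h0
    rw [sum_split hmn (fun k => A r k * w k)] at h0
    linarith
  have h3 := congrArg (fun v => (Bmat hmn A)⁻¹ *ᵥ v) key
  rw [Matrix.mulVec_mulVec, Matrix.nonsing_inv_mul _ h.basis_isUnit, Matrix.one_mulVec,
    Matrix.mulVec_neg, Matrix.mulVec_mulVec] at h3
  have h4 := congrFun h3 i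
  simp only [Pi.neg_apply] at h4
  rw [h4]
  rw [show ((Bmat hmn A)⁻¹ * Nmat hmn A) = BN hmn A from rfl]
  simp [Matrix.mulVec, dotProduct]

/-- `A u^j = 0`. -/
lemma A_mulVec_uvec (j : Fin (n - m)) : A *ᵥ uvec hmn A j = 0 := by
  funext r
  show ∑ k, A r k * uvec hmn A j k = 0
  rw [sum_split hmn]
  have h1 : ∑ i : Fin m, A r (bIdx hmn i) * uvec hmn A j (bIdx hmn i)
      = -∑ i : Fin m, Bmat hmn A r i * BN hmn A i j := by
    rw [← Finset.sum_neg_distrib]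
    refine Finset.sum_congr rfl fun i _ => ?_
    rw [uvec_bIdx]
    simp only [Bmat, Matrix.of_apply]
    ring
  have h2 : ∑ j' : Fin (n - m), A r (nIdx hmn j') * uvec hmn A j (nIdx hmn j')
      = Nmat hmn A r j := by
    have hterm : ∀ j' ∈ Finset.univ, A r (nIdx hmn j') * uvec hmn A j (nIdx hmn j')
        = if j' = j then Nmat hmn A r j else 0 := by
      intro j' _
      rw [uvec_nIdx]
      by_cases hjj : j' = j
      · subst hjj; simp [Nmat]
      · simp [hjj]
    rw [Finset.sum_congr rfl hterm]
    simp
  rw [h1, h2]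
  have h3 : ∑ i : Fin m, Bmat hmn A r i * BN hmn A i j = (Bmat hmn A * BN hmn A) r j := rfl
  have h4 : Bmat hmn A * BN hmn A = Nmat hmn A := by
    rw [BN, ← Matrix.mul_assoc, Matrix.mul_nonsing_inv _ h.basis_isUnit, Matrix.one_mul]
  rw [h3, h4]
  ring

/-- The objective gap of a feasible point. -/
lemma gap_eq {x : Fin n → ℝ} (hx : PrimalFeasible A b x) :
    c ⬝ᵥ x - c ⬝ᵥ xstar = ∑ j, sstar (nIdx hmn j) * x (nIdx hmn j) := by
  have hc : c = Aᵀ *ᵥ ystar + sstar := h.dual_feas.1.symm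
  have key : ∀ z : Fin n → ℝ, A *ᵥ z = b → c ⬝ᵥ z = ystar ⬝ᵥ b + sstar ⬝ᵥ z := by
    intro z hz
    rw [hc, add_dotProduct]
    congr 1
    rw [Matrix.mulVec_transpose, ← Matrix.dotProduct_mulVec, hz]
  rw [key x hx.1, key xstar h.primal_feas.1]
  have hsx : sstar ⬝ᵥ xstar = 0 := by
    rw [dotProduct]
    refine Finset.sum_eq_zero fun i _ => ?_
    by_cases hi : (i : ℕ) < m
    · rw [sstar_zero h hi, zero_mul]
    · rw [xstar_zero h (by omega), mul_zero]
  have hsplit : sstar ⬝ᵥ x = ∑ j, sstar (nIdx hmn j) * x (nIdx hmn j) := by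
    rw [dotProduct, sum_split hmn]
    rw [Finset.sum_eq_zero fun i (_ : i ∈ Finset.univ) =>
      by rw [sstar_zero h (by simpa [bIdx] using i.isLt), zero_mul]]
    ring
  rw [hsx, hsplit]
  ring

lemma c_dot_uvec (j : Fin (n - m)) : c ⬝ᵥ uvec hmn A j = sstar (nIdx hmn j) := by
  have hc : c = Aᵀ *ᵥ ystar + sstar := h.dual_feas.1.symm
  rw [hc, add_dotProduct, Matrix.mulVec_transpose, ← Matrix.dotProduct_mulVec,
    A_mulVec_uvec h, dotProduct_zero, zero_add, dotProduct, sum_split hmn]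
  rw [Finset.sum_eq_zero fun i (_ : i ∈ Finset.univ) =>
    by rw [sstar_zero h (by simpa [bIdx] using i.isLt), zero_mul]]
  rw [zero_add]
  rw [show sstar (nIdx hmn j) = ∑ j' : Fin (n - m),
      (if j' = j then sstar (nIdx hmn j') else 0) from (by simp)]
  refine Finset.sum_congr rfl fun j' _ => ?_
  rw [uvec_nIdx]
  by_cases hjj : j' = j
  · subst hjj; simp
  · simp [hjj]

/-- Decomposition of a feasible point along the edge directions. -/
lemma feasible_decomp {x : Fin n → ℝ} (hx : PrimalFeasible A b x) :
    x - xstar = ∑ j, x (nIdx hmn j) • uvec hmn A j := by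
  have hw : A *ᵥ (x - xstar) = 0 := by
    rw [Matrix.mulVec_sub, hx.1, h.primal_feas.1, sub_self]
  funext k
  rw [show (∑ j, x (nIdx hmn j) • uvec hmn A j) k
      = ∑ j, x (nIdx hmn j) * uvec hmn A j k from by simp]
  by_cases hk : (k : ℕ) < m
  · have hkb : k = bIdx hmn ⟨(k : ℕ), hk⟩ := by simp [bIdx, Fin.ext_iff]
    rw [hkb]
    have := ker_basic h hw ⟨(k : ℕ), hk⟩
    simp only [Pi.sub_apply] at this
    rw [show (x - xstar) (bIdx hmn ⟨(k : ℕ), hk⟩)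
        = x (bIdx hmn ⟨(k : ℕ), hk⟩) - xstar (bIdx hmn ⟨(k : ℕ), hk⟩) from rfl, this]
    rw [← Finset.sum_neg_distrib]
    refine Finset.sum_congr rfl fun j _ => ?_
    rw [uvec_bIdx]
    have hxz : xstar (nIdx hmn j) = 0 := xstar_zero h (by simp [nIdx])
    rw [hxz]
    ring
  · have hkm : (k : ℕ) - m < n - m := by have := k.isLt; omega
    have hkb : k = nIdx hmn ⟨(k : ℕ) - m, hkm⟩ := by simp [nIdx, Fin.ext_iff]; omega
    rw [hkb]
    have hxz : xstar (nIdx hmn ⟨(k : ℕ) - m, hkm⟩) = 0 := xstar_zero h (by simp [nIdx])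
    rw [show (x - xstar) (nIdx hmn ⟨(k : ℕ) - m, hkm⟩)
        = x (nIdx hmn ⟨(k : ℕ) - m, hkm⟩) - xstar (nIdx hmn ⟨(k : ℕ) - m, hkm⟩) from rfl, hxz]
    rw [show (∑ j, x (nIdx hmn j) * uvec hmn A j (nIdx hmn ⟨(k : ℕ) - m, hkm⟩))
        = ∑ j, (if j = ⟨(k : ℕ) - m, hkm⟩ then x (nIdx hmn j) else 0) from
      Finset.sum_congr rfl fun j _ => by
        rw [show uvec hmn A j (nIdx hmn ⟨(k : ℕ) - m, hkm⟩) = if (⟨(k : ℕ) - m, hkm⟩ : Fin (n - m)) = j then 1 else 0 from uvec_nIdx j _]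
        by_cases hjj : j = ⟨(k : ℕ) - m, hkm⟩
        · subst hjj; simp
        · rw [if_neg (fun hc => hjj hc.symm), if_neg hjj, mul_zero]]
    simp

lemma enorm_uvec (j : Fin (n - m)) :
    enorm (uvec hmn A j) = Real.sqrt ((∑ i, (BN hmn A i j) ^ 2) + 1) := by
  rw [enorm]
  congr 1
  rw [sum_split hmn (fun k => (uvec hmn A j k) ^ 2)]
  congr 1
  · refine Finset.sum_congr rfl fun i _ => ?_
    rw [uvec_bIdx]; ring
  · rw [show (1 : ℝ) = ∑ j' : Fin (n - m), (if j' = j then (1 : ℝ) else 0) from by simp]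
    refine Finset.sum_congr rfl fun j' _ => ?_
    rw [uvec_nIdx]
    by_cases hjj : j' = j <;> simp [hjj]


/-- Value of `x* + t • u^j` at basic/nonbasic coordinates. -/
lemma edge_bIdx (j : Fin (n - m)) (t : ℝ) (i : Fin m) :
    (xstar + t • uvec hmn A j) (bIdx hmn i) = xstar (bIdx hmn i) - t * BN hmn A i j := by
  simp only [Pi.add_apply, Pi.smul_apply, smul_eq_mul, uvec_bIdx]
  ring

lemma edge_nIdx (j j' : Fin (n - m)) (t : ℝ) :
    (xstar + t • uvec hmn A j) (nIdx hmn j') = if j' = j then t else 0 := by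
  have hxz : xstar (nIdx hmn j') = 0 := xstar_zero h (by simp [nIdx])
  simp [uvec_nIdx, hxz, mul_ite]

/-- Feasibility along the edge, using the `δ ≤ δ̄` hypothesis. -/
lemma edge_feasible {δ : ℝ} (hδpos : 0 < δ)
    (hδbar : ∀ x ∈ Set.extremePoints ℝ {x | PrimalFeasible A b x}, x ≠ xstar →
      δ ≤ c ⬝ᵥ x - c ⬝ᵥ xstar)
    (j : Fin (n - m)) {t : ℝ} (ht : 0 ≤ t) (hts : t * sstar (nIdx hmn j) ≤ δ) :
    PrimalFeasible A b (xstar + t • uvec hmn A j) := by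
  have hAeq : ∀ r : ℝ, A *ᵥ (xstar + r • uvec hmn A j) = b := by
    intro r
    rw [Matrix.mulVec_add, Matrix.mulVec_smul, A_mulVec_uvec h, smul_zero, add_zero,
      h.primal_feas.1]
  have claim : ∀ i : Fin m, t * BN hmn A i j ≤ xstar (bIdx hmn i) := by
    by_contra hcon
    push_neg at hcon
    obtain ⟨i1, hi1⟩ := hcon
    have hxpos1 := xstar_pos h i1
    have hBN1 : 0 < BN hmn A i1 j := by nlinarith
    have ht0 : 0 < t := by nlinarith
    set P : Finset (Fin m) := Finset.univ.filter (fun i => 0 < BN hmn A i j) with hP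
    have hi1P : i1 ∈ P := by simp [hP, hBN1]
    obtain ⟨i0, hi0P, hi0min⟩ := Finset.exists_min_image P
      (fun i => xstar (bIdx hmn i) / BN hmn A i j) ⟨i1, hi1P⟩
    have hBN0 : 0 < BN hmn A i0 j := by
      have := hi0P; simp [hP] at this; exact this
    set T : ℝ := xstar (bIdx hmn i0) / BN hmn A i0 j with hT
    have hT0 : 0 < T := div_pos (xstar_pos h i0) hBN0
    have hTt : T < t := by
      have h5 : xstar (bIdx hmn i1) / BN hmn A i1 j < t := by
        rw [div_lt_iff₀ hBN1]; nlinarith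
      exact lt_of_le_of_lt (hi0min i1 hi1P) h5
    set xhat : Fin n → ℝ := xstar + T • uvec hmn A j with hxhat
    have hfeas : PrimalFeasible A b xhat := by
      refine ⟨hAeq T, fun k => ?_⟩
      by_cases hk : (k : ℕ) < m
      · have hkb : k = bIdx hmn ⟨(k : ℕ), hk⟩ := by simp [bIdx, Fin.ext_iff]
        rw [hkb, hxhat, edge_bIdx h]
        by_cases hbn : 0 < BN hmn A ⟨(k : ℕ), hk⟩ j
        · have hle : T ≤ xstar (bIdx hmn ⟨(k : ℕ), hk⟩) / BN hmn A ⟨(k : ℕ), hk⟩ j :=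
            hi0min _ (by simp [hP, hbn])
          rw [le_div_iff₀ hbn] at hle
          nlinarith
        · push_neg at hbn
          have := xstar_pos h ⟨(k : ℕ), hk⟩
          nlinarith
      · have hkm : (k : ℕ) - m < n - m := by have := k.isLt; omega
        have hkb : k = nIdx hmn ⟨(k : ℕ) - m, hkm⟩ := by simp [nIdx, Fin.ext_iff]; omega
        rw [hkb, hxhat, edge_nIdx h]
        by_cases hjj : (⟨(k : ℕ) - m, hkm⟩ : Fin (n - m)) = j <;> simp [hjj] <;> linarith
    have hxhat_i0 : xhat (bIdx hmn i0) = 0 := by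
      rw [hxhat, edge_bIdx h, hT, div_mul_cancel₀ _ (ne_of_gt hBN0), sub_self]
    have hne : xhat ≠ xstar := by
      intro hc
      have := congrFun hc (bIdx hmn i0)
      rw [hxhat_i0] at this
      exact absurd this.symm (ne_of_gt (xstar_pos h i0))
    have hext : xhat ∈ Set.extremePoints ℝ {x | PrimalFeasible A b x} := by
      rw [mem_extremePoints]
      refine ⟨hfeas, ?_⟩
      intro u hu v hv hseg
      obtain ⟨a, b', ha, hb, hab, habv⟩ := hseg
      have hzero : ∀ k : Fin n, xhat k = 0 → u k = 0 ∧ v k = 0 := by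
        intro k hk0
        have h1 : a * u k + b' * v k = 0 := by
          have := congrFun habv k
          simp only [Pi.add_apply, Pi.smul_apply, smul_eq_mul] at this
          rw [this, hk0]
        have hu0 : 0 ≤ u k := hu.2 k
        have hv0 : 0 ≤ v k := hv.2 k
        constructor <;> nlinarith
      have hwker : A *ᵥ (u - v) = 0 := by
        rw [Matrix.mulVec_sub, hu.1, hv.1, sub_self]
      have hnb : ∀ j' : Fin (n - m), j' ≠ j → (u - v) (nIdx hmn j') = 0 := by
        intro j' hjj
        have hz : xhat (nIdx hmn j') = 0 := by
          rw [hxhat, edge_nIdx h, if_neg hjj]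
        obtain ⟨h1, h2⟩ := hzero _ hz
        simp [h1, h2]
      have hwj : (u - v) (nIdx hmn j) = 0 := by
        have hk := ker_basic h hwker i0
        obtain ⟨h1, h2⟩ := hzero _ hxhat_i0
        rw [show (u - v) (bIdx hmn i0) = 0 from by simp [h1, h2]] at hk
        have hsum : ∑ j', BN hmn A i0 j' * (u - v) (nIdx hmn j')
            = BN hmn A i0 j * (u - v) (nIdx hmn j) := by
          rw [Finset.sum_eq_single j]
          · intro j' _ hjj
            rw [hnb j' hjj, mul_zero]
          · intro hc
            exact absurd (Finset.mem_univ j) hc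
        rw [hsum] at hk
        have := hk.symm
        rw [neg_eq_zero.symm] at this
        have h6 : BN hmn A i0 j * (u - v) (nIdx hmn j) = 0 := by linarith
        exact (mul_eq_zero.1 h6).resolve_left (ne_of_gt hBN0)
      have hwall : ∀ j' : Fin (n - m), (u - v) (nIdx hmn j') = 0 := by
        intro j'
        by_cases hjj : j' = j
        · rw [hjj]; exact hwj
        · exact hnb j' hjj
      have huv : u = v := by
        funext k
        have hk0 : (u - v) k = 0 := by
          by_cases hk : (k : ℕ) < m
          · have hkb : k = bIdx hmn ⟨(k : ℕ), hk⟩ := by simp [bIdx, Fin.ext_iff]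
            rw [hkb, ker_basic h hwker]
            rw [Finset.sum_eq_zero fun j' _ => by rw [hwall j', mul_zero]]
            exact neg_zero
          · have hkm : (k : ℕ) - m < n - m := by have := k.isLt; omega
            have hkb : k = nIdx hmn ⟨(k : ℕ) - m, hkm⟩ := by simp [nIdx, Fin.ext_iff]; omega
            rw [hkb]
            exact hwall _
        have : u k - v k = 0 := hk0
        linarith
      have hux : u = xhat := by
        rw [← habv, huv]
        funext k
        simp only [Pi.add_apply, Pi.smul_apply, smul_eq_mul]
        rw [← add_mul, hab, one_mul]
      exact ⟨hux, huv ▸ hux⟩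
    have hgap : c ⬝ᵥ xhat - c ⬝ᵥ xstar = T * sstar (nIdx hmn j) := by
      rw [hxhat]
      rw [dotProduct_add, dotProduct_smul, c_dot_uvec h]
      simp [smul_eq_mul]
    have hδle := hδbar xhat hext hne
    rw [hgap] at hδle
    have hs := sstar_pos h j
    nlinarith
  refine ⟨hAeq t, fun k => ?_⟩
  by_cases hk : (k : ℕ) < m
  · have hkb : k = bIdx hmn ⟨(k : ℕ), hk⟩ := by simp [bIdx, Fin.ext_iff]
    rw [hkb, edge_bIdx h]
    have := claim ⟨(k : ℕ), hk⟩
    linarith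
  · have hkm : (k : ℕ) - m < n - m := by have := k.isLt; omega
    have hkb : k = nIdx hmn ⟨(k : ℕ) - m, hkm⟩ := by simp [nIdx, Fin.ext_iff]; omega
    rw [hkb, edge_nIdx h]
    by_cases hjj : (⟨(k : ℕ) - m, hkm⟩ : Fin (n - m)) = j <;> simp [hjj] <;> linarith

end WithH

end Aux

/-- Lemma 5 of the paper. Under the unique-optimum assumption, for
`0 < δ ≤ δ̄_p`, the diameter of the primal `δ`-sublevel set satisfies
`δ·max_j √(‖B⁻¹N_{·,j}‖²+1)/s*_{m+j} ≤ D^p_δ ≤ 2δ·max_j √(‖B⁻¹N_{·,j}‖²+1)/s*_{m+j}`. -/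
theorem primal_sublevel_diameter_bounds (m n : ℕ) (hmn : m ≤ n)
    (A : Matrix (Fin m) (Fin n) ℝ) (b : Fin m → ℝ) (c : Fin n → ℝ)
    (xstar : Fin n → ℝ) (ystar : Fin m → ℝ) (sstar : Fin n → ℝ)
    (h : UniqueOpt hmn A b c xstar ystar sstar)
    (δ : ℝ) (hδpos : 0 < δ)
    (hδbar : ∀ x ∈ Set.extremePoints ℝ {x | PrimalFeasible A b x}, x ≠ xstar →
      δ ≤ c ⬝ᵥ x - c ⬝ᵥ xstar) :
    δ * (⨆ j : Fin (n - m),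
        Real.sqrt ((∑ i, (BN hmn A i j) ^ 2) + 1) / sstar (nIdx hmn j)) ≤
      DdiamP A b c xstar δ ∧
    DdiamP A b c xstar δ ≤
      2 * δ * (⨆ j : Fin (n - m),
        Real.sqrt ((∑ i, (BN hmn A i j) ^ 2) + 1) / sstar (nIdx hmn j)) := by
  classical
  set f : Fin (n - m) → ℝ := fun j =>
    Real.sqrt ((∑ i, (BN hmn A i j) ^ 2) + 1) / sstar (nIdx hmn j) with hf
  set M : ℝ := ⨆ j, f j with hM
  have hM0 : 0 ≤ M :=
    Real.iSup_nonneg fun j => div_nonneg (Real.sqrt_nonneg _) (le_of_lt (sstar_pos h j))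
  have hfM : ∀ j, f j ≤ M := fun j => le_ciSup (Set.Finite.bddAbove (Set.finite_range f)) j
  have hpoint : ∀ x ∈ Xlev A b c xstar δ, enorm (x - xstar) ≤ δ * M := by
    intro x hx
    obtain ⟨hxf, hxgap⟩ := hx
    rw [feasible_decomp h hxf]
    calc enorm (∑ j, x (nIdx hmn j) • uvec hmn A j)
        ≤ ∑ j, enorm (x (nIdx hmn j) • uvec hmn A j) := enorm_sum_le' _
      _ ≤ ∑ j, (sstar (nIdx hmn j) * x (nIdx hmn j)) * M := by
          refine Finset.sum_le_sum fun j _ => ?_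
          rw [enorm_smul', abs_of_nonneg (hxf.2 _), enorm_uvec h]
          have h1 := hfM j
          have hs := sstar_pos h j
          rw [hf] at h1
          simp only at h1
          rw [div_le_iff₀ hs] at h1
          have hxj := hxf.2 (nIdx hmn j)
          nlinarith
      _ = (∑ j, sstar (nIdx hmn j) * x (nIdx hmn j)) * M := (Finset.sum_mul _ _ _).symm
      _ ≤ δ * M := by
          have hsum : (∑ j, sstar (nIdx hmn j) * x (nIdx hmn j)) ≤ δ := by
            rw [← gap_eq h hxf]; exact hxgap
          exact mul_le_mul_of_nonneg_right hsum hM0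
  have hxstar_mem : xstar ∈ Xlev A b c xstar δ :=
    ⟨h.primal_feas, by rw [sub_self]; exact hδpos.le⟩
  set S := {d | ∃ u ∈ Xlev A b c xstar δ, ∃ v ∈ Xlev A b c xstar δ, d = enorm (u - v)} with hS
  have hD : DdiamP A b c xstar δ = sSup S := rfl
  have hSbound : ∀ d ∈ S, d ≤ 2 * δ * M := by
    rintro d ⟨u, hu, v, hv, rfl⟩
    have h1 := hpoint u hu
    have h2 := hpoint v hv
    have h3 : enorm (u - v) ≤ enorm (u - xstar) + enorm (v - xstar) := by
      rw [show u - v = (u - xstar) - (v - xstar) from by abel]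
      exact enorm_sub_le' _ _
    linarith
  have h2δM : 0 ≤ 2 * δ * M := mul_nonneg (by linarith) hM0
  have hBdd : BddAbove S := ⟨2 * δ * M, fun d hd => hSbound d hd⟩
  constructor
  · rw [hD]
    by_cases hnm : n - m = 0
    · haveI : IsEmpty (Fin (n - m)) := by rw [hnm]; exact Fin.isEmpty'
      rw [hM, Real.iSup_of_isEmpty, mul_zero]
      refine le_csSup hBdd ?_
      exact ⟨xstar, hxstar_mem, xstar, hxstar_mem, by simp [enorm]⟩
    · haveI : Nonempty (Fin (n - m)) := ⟨⟨0, Nat.pos_of_ne_zero hnm⟩⟩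
      have hjle : ∀ j, δ * f j ≤ sSup S := by
        intro j
        have hs := sstar_pos h j
        set t : ℝ := δ / sstar (nIdx hmn j) with htdef
        have ht : 0 ≤ t := le_of_lt (div_pos hδpos hs)
        have hts : t * sstar (nIdx hmn j) = δ := div_mul_cancel₀ _ (ne_of_gt hs)
        have hfeas := edge_feasible h hδpos hδbar j ht (le_of_eq hts)
        have hmem : (xstar + t • uvec hmn A j) ∈ Xlev A b c xstar δ := by
          refine ⟨hfeas, ?_⟩
          rw [dotProduct_add, dotProduct_smul, c_dot_uvec h]
          simp only [smul_eq_mul]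
          linarith [le_of_eq hts]
        have hd : enorm ((xstar + t • uvec hmn A j) - xstar) = δ * f j := by
          rw [add_sub_cancel_left, enorm_smul', abs_of_nonneg ht, enorm_uvec h, hf]
          simp only
          rw [htdef]
          field_simp
        have hmemS : δ * f j ∈ S := ⟨_, hmem, xstar, hxstar_mem, hd.symm⟩
        exact le_csSup hBdd hmemS
      have hMD : M ≤ sSup S / δ := by
        rw [hM]
        exact ciSup_le fun j => (le_div_iff₀ hδpos).2 (by rw [mul_comm]; exact hjle j)
      calc δ * M ≤ δ * (sSup S / δ) := mul_le_mul_of_nonneg_left hMD hδpos.le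
        _ = sSup S := by field_simp
  · rw [hD]
    exact Real.sSup_le hSbound h2δM


end LPPaper
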